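/- arXiv:2212.05348 — 7 statements merged into one kernel-verified Lean document; each statement's English description precedes it below -/
import Mathlib

section
/- Let V ⊆ F^n be a finite set of inputs for a finite field F with |F| ≥ 2, and suppose V has a diagonal of length l, i.e., there exists a point p ∈ V which differs from every other point of V in at least l ≥ 2 coordinates. Then there exists an output assignment T: V → F such that the monomial ideal I = ⟨m(s,s') : T(s) ≠ T(s')⟩, where m(s,s') = ∏_{s_i ≠ s'_i} x_i, has at least l minimal primes; equivalently, the data set (V,T) has at least l unsigned min-sets. -/
/-!
Take `T` to be the indicator of `p` and let `q₀ ≠ p` be a point of `V` closest to `p`, differing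
from it exactly on `S`, so `l ≤ |S|`. For `i ∈ S` let `Pᵢ` be the prime generated by `xᵢ` and the
variables outside `S`. Every generator of `I` is `m(p,q)` with `q ≠ p`, and by minimality of `S`
the set where `q` differs from `p` is either `S` or leaves `S`; either way `m(p,q) ∈ Pᵢ`.
A minimal prime of `I` inside `Pᵢ` contains `m(p,q₀) = ∏_{j ∈ S} xⱼ`, hence some `xⱼ` with
`j ∈ S`, and inside `Pᵢ` this forces `j = i`. These minimal primes are distinct for distinct `i`.
-/

open MvPolynomial

/-- The squarefree monomial `m(p,q)` recording the coordinates where `p` and `q`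
differ. -/
noncomputable def diffMon {n : ℕ} {F : Type*} [DecidableEq F] (R : Type*) [CommRing R]
    (p q : Fin n → F) : MvPolynomial (Fin n) R :=
  ∏ i ∈ Finset.univ.filter (fun i => p i ≠ q i), X i

open Finset

theorem Finset.exists_mem_eq_or_notMem_of_card_le {ι : Type*} {S E : Finset ι}
    (hcard : #S ≤ #E) {i : ι} (hi : i ∈ S) : ∃ j ∈ E, j = i ∨ j ∉ S := by
  by_cases hsub : E ⊆ S
  · exact ⟨i, eq_of_subset_of_card_le hsub hcard ▸ hi, .inl rfl⟩
  · obtain ⟨j, hjE, hjS⟩ := not_subset.1 hsub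
    exact ⟨j, hjE, .inr hjS⟩

namespace MvPolynomial

variable {σ R : Type*} [CommRing R]

variable (R) in
/-- The ideal `⟨X k : k ∈ U⟩`, realised as the kernel of the substitution killing these
variables, which makes it visibly prime over a domain. -/
noncomputable def idealOfVarsIn (U : Set σ) : Ideal (MvPolynomial σ R) :=
  RingHom.ker (aeval (Uᶜ.indicator (X : σ → MvPolynomial σ R)))

instance isPrime_idealOfVarsIn [IsDomain R] (U : Set σ) : (idealOfVarsIn R U).IsPrime :=
  RingHom.ker_isPrime _

theorem X_mem_idealOfVarsIn_iff [Nontrivial R] {U : Set σ} {j : σ} :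
    X j ∈ idealOfVarsIn R U ↔ j ∈ U := by
  by_cases hj : j ∈ U <;> simp [idealOfVarsIn, hj, X_ne_zero]

theorem exists_mem_minimalPrimes_X_mem_iff [IsDomain R] {I : Ideal (MvPolynomial σ R)}
    {S : Finset σ} (hS : ∏ j ∈ S, X j ∈ I) {i : σ} (hi : i ∈ S)
    (hI : I ≤ idealOfVarsIn R (insert i (↑S)ᶜ)) :
    ∃ Q ∈ I.minimalPrimes, ∀ j ∈ S, X j ∈ Q ↔ j = i := by
  obtain ⟨Q, hQ, hQP⟩ := Ideal.exists_minimalPrimes_le hI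
  have hQprime : Q.IsPrime := hQ.1.1
  have hXQ (j : σ) (hj : j ∈ S) (hjQ : X j ∈ Q) : j = i := by
    simpa [hj] using X_mem_idealOfVarsIn_iff.1 (hQP hjQ)
  obtain ⟨j, hj, hjQ⟩ := Ideal.IsPrime.prod_mem_iff.1 (hQ.1.2 hS)
  refine ⟨Q, hQ, fun k hk => ⟨hXQ k hk, ?_⟩⟩
  rintro rfl
  exact hXQ j hj hjQ ▸ hjQ

theorem card_le_ncard_minimalPrimes [Finite σ] [IsDomain R] [IsNoetherianRing R]
    {I : Ideal (MvPolynomial σ R)} {S : Finset σ} (hS : ∏ j ∈ S, X j ∈ I)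
    (hI : ∀ i ∈ S, I ≤ idealOfVarsIn R (insert i (↑S)ᶜ)) :
    #S ≤ I.minimalPrimes.ncard := by
  choose! Q hQ hXQ using fun i hi => exists_mem_minimalPrimes_X_mem_iff hS hi (hI i hi)
  have hinj : Set.InjOn Q S := fun a ha b hb hab =>
    (hXQ b hb a ha).1 (hab ▸ (hXQ a ha a ha).2 rfl)
  calc #S = (Q '' S).ncard := by rw [hinj.ncard_image, Set.ncard_coe_finset]
    _ ≤ I.minimalPrimes.ncard :=
      Set.ncard_le_ncard (Set.image_subset_iff.2 hQ) (I.finite_minimalPrimes_of_isNoetherianRing _)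

end MvPolynomial

section diffMon

variable {n : ℕ} {F : Type*} [DecidableEq F] {R : Type*} [CommRing R]

theorem diffMon_comm (s s' : Fin n → F) : diffMon R s s' = diffMon R s' s := by
  simp only [diffMon, ne_comm]

theorem diffMon_mem_idealOfVarsIn {p q : Fin n → F} {U : Set (Fin n)} {j : Fin n}
    (hj : p j ≠ q j) (hjU : j ∈ U) : diffMon R p q ∈ idealOfVarsIn R U := by
  simp only [diffMon, idealOfVarsIn, RingHom.mem_ker, map_prod]
  exact prod_eq_zero (mem_filter.2 ⟨mem_univ j, hj⟩) (by simp [hjU])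

theorem span_diffMon_le_of_const_off {β : Type*} {V : Finset (Fin n → F)} {p : Fin n → F}
    {T : (Fin n → F) → β} (hT : ∀ s ≠ p, ∀ s' ≠ p, T s = T s')
    {P : Ideal (MvPolynomial (Fin n) R)} (h : ∀ q ∈ V, q ≠ p → diffMon R p q ∈ P) :
    Ideal.span {m | ∃ s ∈ V, ∃ s' ∈ V, T s ≠ T s' ∧ m = diffMon R s s'} ≤ P := by
  rw [Ideal.span_le]
  rintro m ⟨s, hs, s', hs', hTs, rfl⟩
  by_cases hsp : s = p <;> by_cases hs'p : s' = p
  · exact absurd (hsp.trans hs'p.symm ▸ rfl) hTs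
  · exact hsp ▸ h s' hs' hs'p
  · exact diffMon_comm (R := R) s s' ▸ hs'p ▸ h s hs hsp
  · exact absurd (hT s hsp s' hs'p) hTs

end diffMon

theorem stmt7_general {n : ℕ} {F : Type*} [Field F] [DecidableEq F]
    (V : Finset (Fin n → F)) (p : Fin n → F) (hp : p ∈ V)
    (hV : ∃ q ∈ V, q ≠ p) (l : ℕ)
    (hdiag : ∀ q ∈ V, q ≠ p → l ≤ hammingDist p q) :
    ∃ T : (Fin n → F) → F,
      l ≤ (Ideal.minimalPrimes (Ideal.span
        {m : MvPolynomial (Fin n) F |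
          ∃ s ∈ V, ∃ s' ∈ V, T s ≠ T s' ∧ m = diffMon F s s'})).ncard := by
  obtain ⟨q₀, hq₀, hq₀min⟩ := (V.erase p).exists_min_image (hammingDist p)
    (hV.imp fun q ⟨hq, hqp⟩ => mem_erase.2 ⟨hqp, hq⟩)
  obtain ⟨hq₀p, hq₀V⟩ := mem_erase.1 hq₀
  set S : Finset (Fin n) := {i | p i ≠ q₀ i}
  refine ⟨Set.indicator {p} 1,
    (hdiag q₀ hq₀V hq₀p).trans <| card_le_ncard_minimalPrimes (S := S) ?_ fun i hi => ?_⟩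
  · exact Ideal.subset_span ⟨p, hp, q₀, hq₀V, by simp [Ne.symm hq₀p], rfl⟩
  refine span_diffMon_le_of_const_off (p := p) (fun s hs s' hs' => by simp [hs, hs'])
    fun q hq hqp => ?_
  obtain ⟨j, hj, hjS⟩ := exists_mem_eq_or_notMem_of_card_le
    (hq₀min q (mem_erase.2 ⟨hqp, hq⟩)) hi
  exact diffMon_mem_idealOfVarsIn (mem_filter.1 hj).2 (by simpa [S, or_comm] using hjS)

/-- If an input set `V` (containing at least two points) has a diagonal of
length `l ≥ 2` at a point `p` (i.e., `p` differs from every other point of `V`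
in at least `l` coordinates), then there is an output assignment `T` such that
the ideal generated by the monomials `m(s,s')` over pairs with `T s ≠ T s'` has
at least `l` minimal primes (i.e., at least `l` unsigned min-sets). -/
theorem stmt7 {n : ℕ} {F : Type*} [Field F] [Fintype F] [DecidableEq F]
    (V : Finset (Fin n → F)) (p : Fin n → F) (hp : p ∈ V)
    (hV : ∃ q ∈ V, q ≠ p) (l : ℕ) (hl : 2 ≤ l)
    (hdiag : ∀ q ∈ V, q ≠ p → l ≤ hammingDist p q) :
    ∃ T : (Fin n → F) → F,
      l ≤ (Ideal.minimalPrimes (Ideal.span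
        {m : MvPolynomial (Fin n) F |
          ∃ s ∈ V, ∃ s' ∈ V, T s ≠ T s' ∧ m = diffMon F s s'})).ncard :=
  stmt7_general V p hp hV l hdiag
end

section
/- Let I be a squarefree monomial ideal of F[x_1,...,x_n] generated only by monomials of degree at least l. Then I has at least l minimal primes (counting with the convention that each minimal prime is generated by a subset of variables). -/
/-!
Take a generator `∏_{j ∈ σ₀} x_j` of minimal degree `|σ₀| ≥ l`. For `i ∈ σ₀`, the prime `Q_i`
generated by the variables outside `σ₀ \ {i}` contains every generator (none is supported in
`σ₀ \ {i}`, by minimality), so some minimal prime `P_i ⊆ Q_i` of the ideal exists. Since `P_i`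
contains `∏_{j ∈ σ₀} x_j` but no `x_j` with `j ∈ σ₀ \ {i}`, it contains `x_i`, which tells the
`P_i` apart.
-/

open MvPolynomial

theorem Ideal.IsPrime.mem_of_prod_mem_of_forall_ne_notMem {R ι : Type*} [CommRing R]
    {P : Ideal R} (hP : P.IsPrime) {s : Finset ι} {x : ι → R} (hprod : ∏ j ∈ s, x j ∈ P)
    {i : ι} (hx : ∀ j ∈ s, j ≠ i → x j ∉ P) : x i ∈ P := by
  obtain ⟨j, hjs, hjP⟩ := hP.prod_mem_iff.mp hprod
  by_cases hji : j = i
  · exact hji ▸ hjP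
  · exact absurd hjP (hx j hjs hji)

theorem Ideal.card_le_ncard_minimalPrimes {R ι : Type*} [CommRing R] [IsNoetherianRing R]
    {I : Ideal R} {s : Finset ι} {x : ι → R} (hprod : ∏ j ∈ s, x j ∈ I) (Q : ι → Ideal R)
    (hQ : ∀ i ∈ s, (Q i).IsPrime) (hIQ : ∀ i ∈ s, I ≤ Q i)
    (hx : ∀ i ∈ s, ∀ j ∈ s, j ≠ i → x j ∉ Q i) :
    s.card ≤ I.minimalPrimes.ncard := by
  have hmin : ∀ i ∈ s, ∃ P ∈ I.minimalPrimes, P ≤ Q i := fun i hi =>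
    haveI := hQ i hi
    Ideal.exists_minimalPrimes_le (hIQ i hi)
  choose! P hPmin hPQ using hmin
  have hxP : ∀ i ∈ s, x i ∈ P i := fun i hi =>
    (hPmin i hi).1.1.mem_of_prod_mem_of_forall_ne_notMem ((hPmin i hi).1.2 hprod)
      fun j hj hji hjP => hx i hi j hj hji (hPQ i hi hjP)
  have hinj : Set.InjOn P s := by
    intro i hi i' hi' hPi
    by_contra hii'
    exact hx i' hi' i hi hii' (hPQ i' hi' (hPi ▸ hxP i hi))
  have hfin : I.minimalPrimes.Finite := by
    rw [Ideal.minimalPrimes_eq_comap]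
    exact (minimalPrimes.finite_of_isNoetherianRing _).image _
  calc s.card = (P '' s).ncard := by rw [hinj.ncard_image, Set.ncard_coe_finset]
    _ ≤ I.minimalPrimes.ncard :=
      Set.ncard_le_ncard (Set.image_subset_iff.mpr fun i hi => hPmin i hi) hfin

namespace MvPolynomial

variable {σ R : Type*} [CommRing R]

noncomputable def killVarsOutside (t : Set σ) : MvPolynomial σ R →ₐ[R] MvPolynomial σ R :=
  aeval (t.indicator X)

theorem killVarsOutside_X_of_mem {t : Set σ} {j : σ} (hj : j ∈ t) :
    killVarsOutside (R := R) t (X j) = X j := by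
  simp [killVarsOutside, Set.indicator_of_mem hj]

theorem killVarsOutside_prod_X_of_not_subset {t : Set σ} {s : Finset σ} (hs : ¬ ↑s ⊆ t) :
    killVarsOutside (R := R) t (∏ j ∈ s, X j) = 0 := by
  obtain ⟨j, hjs, hjt⟩ := Set.not_subset.mp hs
  rw [map_prod]
  exact Finset.prod_eq_zero hjs (by simp [killVarsOutside, Set.indicator_of_notMem hjt])

theorem X_notMem_ker_killVarsOutside [Nontrivial R] {t : Set σ} {j : σ} (hj : j ∈ t) :
    X j ∉ RingHom.ker (killVarsOutside (R := R) t) := by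
  rw [RingHom.mem_ker, killVarsOutside_X_of_mem hj]
  exact X_ne_zero j

theorem span_prod_X_le_ker_killVarsOutside {M : Set (Finset σ)} {t : Set σ}
    (hM : ∀ s ∈ M, ¬ ↑s ⊆ t) :
    Ideal.span ((fun s => ∏ j ∈ s, (X j : MvPolynomial σ R)) '' M) ≤
      RingHom.ker (killVarsOutside (R := R) t) := by
  rw [Ideal.span_le]
  rintro - ⟨s, hs, rfl⟩
  exact killVarsOutside_prod_X_of_not_subset (hM s hs)

end MvPolynomial

/-- A squarefree monomial ideal generated (nontrivially) only by monomials of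
degree at least `l` has at least `l` minimal primes. -/
theorem stmt8 {n : ℕ} {F : Type*} [Field F] (l : ℕ) (M : Set (Finset (Fin n)))
    (hM : M.Nonempty) (hdeg : ∀ σ ∈ M, l ≤ σ.card) :
    l ≤ (Ideal.minimalPrimes (Ideal.span
      ((fun σ => ∏ i ∈ σ, (X i : MvPolynomial (Fin n) F)) '' M))).ncard := by
  obtain ⟨σ₀, hσ₀, hσ₀_min⟩ := (InvImage.wf Finset.card wellFounded_lt).has_min M hM
  have hnot_subset : ∀ i ∈ σ₀, ∀ σ ∈ M, ¬ ↑σ ⊆ (↑(σ₀.erase i) : Set (Fin n)) := by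
    intro i hi σ hσ hsub
    exact hσ₀_min σ hσ
      ((Finset.card_le_card (Finset.coe_subset.mp hsub)).trans_lt (Finset.card_erase_lt_of_mem hi))
  refine (hdeg σ₀ hσ₀).trans <| Ideal.card_le_ncard_minimalPrimes
    (Ideal.subset_span ⟨σ₀, hσ₀, rfl⟩)
    (fun i => RingHom.ker (killVarsOutside (R := F) (↑(σ₀.erase i) : Set (Fin n))))
    (fun i _ => RingHom.ker_isPrime _)
    (fun i hi => span_prod_X_le_ker_killVarsOutside (hnot_subset i hi))
    (fun i _ j hj hji => X_notMem_ker_killVarsOutside (Finset.mem_erase.mpr ⟨hji, hj⟩))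
end

section
/- Let V ⊆ F^n be a finite input set over a finite field F. If V is cylindrically connected, then for every output assignment T: V → F, the ideal I = ⟨m(p,q) : p,q ∈ V, T(p) ≠ T(q)⟩, where m(p,q) = ∏_{p_i ≠ q_i} x_i, is generated by a subset of the variables {x_1,...,x_n}; in particular I is prime and there is exactly one unsigned min-set. -/
/-!
Let `A = jumpCoords V T` be the set of coordinates along which some edge `p — q` of `V`
changes the output `T`. For such an edge `m(p,q) = x_i`, so `⟨x_i : i ∈ A⟩ ⊆ I`. Conversely, if
`T p ≠ T q`, walk from `p` to `q` inside `C(p,q) ∩ V`; some step of the walk changes `T`, and it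
changes a coordinate that is not frozen in `C(p,q)`, i.e. one with `p_i ≠ q_i`. So `x_i ∣ m(p,q)`
with `i ∈ A`. An ideal generated by variables is the kernel of the substitution killing them,
hence prime.
-/

open MvPolynomial

/-- A set `S ⊆ F^n` is connected if any two of its points are joined by a
sequence inside `S` whose consecutive points are at Hamming distance 1. -/
def PathConn {n : ℕ} {F : Type*} [DecidableEq F] (S : Set (Fin n → F)) : Prop :=
  ∀ p ∈ S, ∀ q ∈ S, ∃ (l : ℕ) (c : ℕ → (Fin n → F)),
    c 0 = p ∧ c l = q ∧ (∀ k ≤ l, c k ∈ S) ∧ ∀ k < l, hammingDist (c k) (c (k + 1)) = 1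

/-- A cylinder: a set where some coordinates are frozen to fixed values. -/
def IsCylinder {n : ℕ} {F : Type*} (C : Set (Fin n → F)) : Prop :=
  ∃ (N : Set (Fin n)) (u : Fin n → F), C = {s | ∀ i ∈ N, s i = u i}

section VariableIdeal

variable {σ R : Type*} [CommRing R]

theorem sub_aeval_killVars_mem_span_X_image (A : Set σ) [DecidablePred (· ∈ A)]
    (y : MvPolynomial σ R) :
    y - aeval (fun i => if i ∈ A then 0 else X i) y ∈ Ideal.span (X '' A) := by
  induction y using MvPolynomial.induction_on with
  | C a => simp
  | add p q hp hq => simpa [add_sub_add_comm] using Ideal.add_mem _ hp hq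
  | mul_X p i hp =>
    by_cases hi : i ∈ A
    · simpa [hi] using Ideal.mul_mem_left _ p (Ideal.subset_span (Set.mem_image_of_mem X hi))
    · simpa [hi, ← sub_mul] using Ideal.mul_mem_right (X i) _ hp

theorem ker_aeval_killVars (A : Set σ) [DecidablePred (· ∈ A)] :
    RingHom.ker (aeval (R := R) fun i => if i ∈ A then (0 : MvPolynomial σ R) else X i) =
      Ideal.span (X '' A) := by
  apply le_antisymm
  · intro y hy
    have h := sub_aeval_killVars_mem_span_X_image A y
    rwa [RingHom.mem_ker.mp hy, sub_zero] at h
  · rw [Ideal.span_le]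
    rintro _ ⟨i, hi, rfl⟩
    simp [hi]

theorem isPrime_span_X_image [IsDomain R] (A : Set σ) :
    (Ideal.span (X '' A : Set (MvPolynomial σ R))).IsPrime := by
  classical
  rw [← ker_aeval_killVars]
  exact RingHom.ker_isPrime _

end VariableIdeal

theorem exists_ne_succ_of_ne {β : Type*} (f : ℕ → β) :
    ∀ {l : ℕ}, f 0 ≠ f l → ∃ k < l, f k ≠ f (k + 1)
  | 0, h => absurd rfl h
  | l + 1, h => by
    by_cases hl : f l = f (l + 1)
    · obtain ⟨k, hk, hne⟩ := exists_ne_succ_of_ne f (hl ▸ h)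
      exact ⟨k, hk.trans (Nat.lt_succ_self l), hne⟩
    · exact ⟨l, Nat.lt_succ_self l, hl⟩

theorem eq_of_hammingDist_eq_one {ι : Type*} [Fintype ι] {β : ι → Type*}
    [∀ i, DecidableEq (β i)] {p q : ∀ i, β i} (h : hammingDist p q = 1) {i j : ι}
    (hi : p i ≠ q i) (hj : p j ≠ q j) : i = j :=
  Finset.card_le_one.mp h.le i (by simpa using hi) j (by simpa using hj)

section Cylinders

variable {n : ℕ} {F : Type*}

def CylindricallyConnected [DecidableEq F] (V : Set (Fin n → F)) : Prop :=
  ∀ C : Set (Fin n → F), IsCylinder C → PathConn (C ∩ V)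

/-- The cylinder `C(p,q)` of the paper. -/
def pairCylinder (p q : Fin n → F) : Set (Fin n → F) :=
  {s | ∀ i, p i = q i → s i = p i}

theorem isCylinder_pairCylinder (p q : Fin n → F) : IsCylinder (pairCylinder p q) :=
  ⟨{i | p i = q i}, p, rfl⟩

theorem left_mem_pairCylinder (p q : Fin n → F) : p ∈ pairCylinder p q :=
  fun _ _ => rfl

theorem right_mem_pairCylinder (p q : Fin n → F) : q ∈ pairCylinder p q :=
  fun _ h => h.symm

theorem ne_of_mem_pairCylinder {p q s t : Fin n → F} (hs : s ∈ pairCylinder p q)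
    (ht : t ∈ pairCylinder p q) {i : Fin n} (hst : s i ≠ t i) : p i ≠ q i :=
  fun hpq => hst ((hs i hpq).trans (ht i hpq).symm)

end Cylinders

section OutputIdeal

variable {n : ℕ} {F β : Type*} [DecidableEq F]

theorem X_dvd_diffMon (R : Type*) [CommRing R] {p q : Fin n → F} {i : Fin n} (h : p i ≠ q i) :
    X i ∣ diffMon R p q :=
  Finset.dvd_prod_of_mem _ (by simpa using h)

theorem diffMon_eq_X_of_hammingDist_eq_one (R : Type*) [CommRing R] {p q : Fin n → F}
    (h : hammingDist p q = 1) {i : Fin n} (hi : p i ≠ q i) : diffMon R p q = X i := by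
  have hcoords : Finset.univ.filter (fun j => p j ≠ q j) = {i} :=
    Finset.eq_singleton_iff_unique_mem.mpr
      ⟨by simpa using hi, fun j hj => eq_of_hammingDist_eq_one h (by simpa using hj) hi⟩
  rw [diffMon, hcoords, Finset.prod_singleton]

def jumpCoords (V : Set (Fin n → F)) (T : (Fin n → F) → β) : Set (Fin n) :=
  {i | ∃ p ∈ V, ∃ q ∈ V, T p ≠ T q ∧ hammingDist p q = 1 ∧ p i ≠ q i}

theorem exists_mem_jumpCoords_of_ne {V : Set (Fin n → F)} (hV : CylindricallyConnected V)
    (T : (Fin n → F) → β) {p q : Fin n → F} (hp : p ∈ V) (hq : q ∈ V) (hT : T p ≠ T q) :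
    ∃ i ∈ jumpCoords V T, p i ≠ q i := by
  obtain ⟨l, c, hc0, hcl, hmem, hdist⟩ :=
    hV _ (isCylinder_pairCylinder p q) p ⟨left_mem_pairCylinder p q, hp⟩
      q ⟨right_mem_pairCylinder p q, hq⟩
  obtain ⟨k, hkl, hTk⟩ := exists_ne_succ_of_ne (T ∘ c) (l := l) (by simpa [hc0, hcl] using hT)
  have hstep : c k ≠ c (k + 1) := fun h => hTk (congrArg T h)
  obtain ⟨i, hi⟩ := Function.ne_iff.mp hstep
  have hk := hmem k hkl.le
  have hk' := hmem (k + 1) hkl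
  exact ⟨i, ⟨c k, hk.2, c (k + 1), hk'.2, hTk, hdist k hkl, hi⟩,
    ne_of_mem_pairCylinder hk.1 hk'.1 hi⟩

theorem span_diffMon_eq_span_X_jumpCoords (R : Type*) [CommRing R] {V : Set (Fin n → F)}
    (hV : CylindricallyConnected V) (T : (Fin n → F) → β) :
    Ideal.span {m : MvPolynomial (Fin n) R | ∃ p ∈ V, ∃ q ∈ V, T p ≠ T q ∧ m = diffMon R p q}
      = Ideal.span (X '' jumpCoords V T) := by
  apply le_antisymm <;> rw [Ideal.span_le]
  · rintro _ ⟨p, hp, q, hq, hT, rfl⟩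
    obtain ⟨i, hiA, hi⟩ := exists_mem_jumpCoords_of_ne hV T hp hq hT
    exact Ideal.mem_of_dvd _ (X_dvd_diffMon R hi) (Ideal.subset_span ⟨i, hiA, rfl⟩)
  · rintro _ ⟨i, ⟨p, hp, q, hq, hT, hdist, hi⟩, rfl⟩
    exact Ideal.subset_span ⟨p, hp, q, hq, hT, (diffMon_eq_X_of_hammingDist_eq_one R hdist hi).symm⟩

end OutputIdeal

theorem stmt10_general {n : ℕ} {F : Type*} [Field F] [DecidableEq F]
    (V : Finset (Fin n → F))
    (hcc : ∀ C : Set (Fin n → F), IsCylinder C → PathConn (C ∩ (V : Set (Fin n → F))))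
    (T : (Fin n → F) → F) :
    (∃ A : Set (Fin n),
      Ideal.span {m : MvPolynomial (Fin n) F | ∃ p ∈ V, ∃ q ∈ V, T p ≠ T q ∧ m = diffMon F p q}
        = Ideal.span ((fun i => (X i : MvPolynomial (Fin n) F)) '' A)) ∧
    (Ideal.span {m : MvPolynomial (Fin n) F |
        ∃ p ∈ V, ∃ q ∈ V, T p ≠ T q ∧ m = diffMon F p q}).IsPrime := by
  have hspan := span_diffMon_eq_span_X_jumpCoords F hcc T
  exact ⟨⟨_, hspan⟩, hspan ▸ isPrime_span_X_image _⟩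

/-- If `V` is cylindrically connected then for every output assignment `T` the
ideal `I = ⟨m(p,q) : T p ≠ T q⟩` is generated by a subset of the variables and
is in particular prime (so there is exactly one unsigned min-set). -/
theorem stmt10 {n : ℕ} {F : Type*} [Field F] [Fintype F] [DecidableEq F]
    (V : Finset (Fin n → F))
    (hcc : ∀ C : Set (Fin n → F), IsCylinder C → PathConn (C ∩ (V : Set (Fin n → F))))
    (T : (Fin n → F) → F) :
    (∃ A : Set (Fin n),
      Ideal.span {m : MvPolynomial (Fin n) F | ∃ p ∈ V, ∃ q ∈ V, T p ≠ T q ∧ m = diffMon F p q}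
        = Ideal.span ((fun i => (X i : MvPolynomial (Fin n) F)) '' A)) ∧
    (Ideal.span {m : MvPolynomial (Fin n) F |
        ∃ p ∈ V, ∃ q ∈ V, T p ≠ T q ∧ m = diffMon F p q}).IsPrime :=
  stmt10_general V hcc T
end

section
/- Let V ⊆ F^n be a finite input set such that for every output assignment T: V → F the ideal I = ⟨m(p,q) : T(p) ≠ T(q)⟩ is prime (equivalently, has a unique unsigned min-set). Then for every cylinder C and every connected set S ⊊ C ∩ V, there exists a point r ∈ (C ∩ V) \ S such that S ∪ {r} is connected. -/
/-!
Take `T` to be the indicator of the complement of `S`. If `p ∈ S` and `q ∈ (C ∩ V) \ S`, the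
monomial `m(p,q)` lies in the prime ideal `I_T`, so one of its variables `x_i` does, with
`p i ≠ q i`; as `p, q ∈ C`, the coordinate `i` is not frozen by `C`. Since `I_T` is generated by
monomials, `x_i ∈ I_T` means some generator `m(s,t)` divides `x_i`: the points `s, t ∈ V` lie on
different sides of `S` and differ only in the coordinate `i`. The one outside `S` is then in `C`
and at Hamming distance `1` from the one inside, so it can be added to `S`.
-/

open MvPolynomial

lemma hammingDist_eq_one_of_ne_of_eq_off {ι : Type*} [Fintype ι] {β : ι → Type*}
    [∀ i, DecidableEq (β i)] {p q : ∀ i, β i} (hpq : p ≠ q) {i : ι}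
    (h : ∀ j ≠ i, p j = q j) : hammingDist p q = 1 := by
  refine le_antisymm (Finset.card_le_one.mpr fun a ha b hb => ?_) (hammingDist_pos.mpr hpq)
  have eq_i : ∀ a ∈ Finset.univ.filter (fun j => p j ≠ q j), a = i := fun a ha => by
    by_contra hai
    exact (Finset.mem_filter.mp ha).2 (h a hai)
  rw [eq_i a ha, eq_i b hb]

lemma IsCylinder.mem_of_eq_off {n : ℕ} {F : Type*} {C : Set (Fin n → F)} (hC : IsCylinder C)
    {p q s r : Fin n → F} {i : Fin n} (hp : p ∈ C) (hq : q ∈ C) (hpq : p i ≠ q i) (hs : s ∈ C)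
    (hsr : ∀ j ≠ i, s j = r j) : r ∈ C := by
  obtain ⟨N, u, rfl⟩ := hC
  intro j hj
  have hji : j ≠ i := by
    rintro rfl
    exact hpq ((hp j hj).trans (hq j hj).symm)
  rw [← hsr j hji]
  exact hs j hj

section

variable {n : ℕ} {F : Type*} [DecidableEq F]

def HammingJoined (S : Set (Fin n → F)) (p q : Fin n → F) : Prop :=
  ∃ (l : ℕ) (c : ℕ → (Fin n → F)),
    c 0 = p ∧ c l = q ∧ (∀ k ≤ l, c k ∈ S) ∧ ∀ k < l, hammingDist (c k) (c (k + 1)) = 1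

lemma pathConn_iff {S : Set (Fin n → F)} :
    PathConn S ↔ ∀ p ∈ S, ∀ q ∈ S, HammingJoined S p q :=
  Iff.rfl

namespace HammingJoined

variable {S S' : Set (Fin n → F)} {p q r : Fin n → F}

lemma refl (hp : p ∈ S) : HammingJoined S p p :=
  ⟨0, fun _ => p, rfl, rfl, fun _ _ => hp, fun _ hk => absurd hk (Nat.not_lt_zero _)⟩

lemma mono (h : HammingJoined S p q) (hSS' : S ⊆ S') : HammingJoined S' p q := by
  obtain ⟨l, c, h0, hl, hmem, hstep⟩ := h
  exact ⟨l, c, h0, hl, fun k hk => hSS' (hmem k hk), hstep⟩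

lemma symm (h : HammingJoined S p q) : HammingJoined S q p := by
  obtain ⟨l, c, h0, hl, hmem, hstep⟩ := h
  refine ⟨l, fun k => c (l - k), by simpa, by simpa, fun k _ => hmem _ (Nat.sub_le l k),
    fun k hk => ?_⟩
  have hlk : l - k = l - (k + 1) + 1 := by omega
  show hammingDist (c (l - k)) (c (l - (k + 1))) = 1
  rw [hlk, hammingDist_comm]
  exact hstep _ (by omega)

lemma snoc (h : HammingJoined S p q) (hr : r ∈ S) (hqr : hammingDist q r = 1) :
    HammingJoined S p r := by
  obtain ⟨l, c, h0, hl, hmem, hstep⟩ := h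
  refine ⟨l + 1, fun k => if k ≤ l then c k else r, by simpa, by simp, fun k _ => ?_,
    fun k hk => ?_⟩
  · dsimp only
    split_ifs with hkl
    exacts [hmem k hkl, hr]
  · rcases Nat.lt_succ_iff_lt_or_eq.mp hk with hk | rfl
    · simpa [hk.le, Nat.succ_le_of_lt hk] using hstep k hk
    · simpa [hl] using hqr

end HammingJoined

lemma pathConn_singleton (r : Fin n → F) : PathConn ({r} : Set (Fin n → F)) := by
  rintro p rfl q rfl
  exact HammingJoined.refl rfl

lemma PathConn.union_singleton {S : Set (Fin n → F)} (hS : PathConn S) {s r : Fin n → F}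
    (hs : s ∈ S) (hsr : hammingDist s r = 1) : PathConn (S ∪ {r}) := by
  rw [pathConn_iff] at hS ⊢
  have hr : r ∈ S ∪ {r} := Or.inr rfl
  have joined_r : ∀ p ∈ S, HammingJoined (S ∪ {r}) p r := fun p hp =>
    ((hS p hp s hs).mono Set.subset_union_left).snoc hr hsr
  rintro p (hp | rfl) q (hq | rfl)
  · exact (hS p hp q hq).mono Set.subset_union_left
  · exact joined_r p hp
  · exact (joined_r q hq).symm
  · exact HammingJoined.refl hr

variable {R : Type*} [CommRing R]

lemma diffMon_eq_monomial (p q : Fin n → F) :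
    diffMon R p q =
      monomial (∑ j ∈ Finset.univ.filter (fun j => p j ≠ q j), Finsupp.single j 1) 1 := by
  rw [diffMon, monomial_sum_one]
  rfl

lemma exists_eq_off_of_X_mem_span_diffMon [Nontrivial R] {V : Finset (Fin n → F)}
    {P : (Fin n → F) → (Fin n → F) → Prop} {i : Fin n}
    (h : X i ∈ Ideal.span {m : MvPolynomial (Fin n) R |
      ∃ p ∈ V, ∃ q ∈ V, P p q ∧ m = diffMon R p q}) :
    ∃ p ∈ V, ∃ q ∈ V, P p q ∧ ∀ j ≠ i, p j = q j := by
  let E : Set (Fin n →₀ ℕ) := {d | ∃ p ∈ V, ∃ q ∈ V, P p q ∧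
    d = ∑ j ∈ Finset.univ.filter (fun j => p j ≠ q j), Finsupp.single j 1}
  have hgen : {m : MvPolynomial (Fin n) R | ∃ p ∈ V, ∃ q ∈ V, P p q ∧ m = diffMon R p q} =
      (fun d => monomial d 1) '' E := by
    ext m
    constructor
    · rintro ⟨p, hp, q, hq, hpq, rfl⟩
      exact ⟨_, ⟨p, hp, q, hq, hpq, rfl⟩, (diffMon_eq_monomial p q).symm⟩
    · rintro ⟨d, ⟨p, hp, q, hq, hpq, rfl⟩, rfl⟩
      exact ⟨p, hp, q, hq, hpq, (diffMon_eq_monomial p q).symm⟩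
  rw [hgen, mem_ideal_span_monomial_image] at h
  obtain ⟨d, ⟨p, hp, q, hq, hpq, rfl⟩, hle⟩ := h (Finsupp.single i 1) (by simp [support_X])
  refine ⟨p, hp, q, hq, hpq, fun j hj => ?_⟩
  by_contra hne
  simpa [Finsupp.finsetSum_apply, Finsupp.single_apply, hne, hj.symm] using hle j

end

theorem stmt11_general {n : ℕ} {F : Type*} [Field F] [DecidableEq F]
    (V : Finset (Fin n → F))
    (hprime : ∀ T : (Fin n → F) → F,
      (Ideal.span {m : MvPolynomial (Fin n) F |
        ∃ p ∈ V, ∃ q ∈ V, T p ≠ T q ∧ m = diffMon F p q}).IsPrime)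
    (C : Set (Fin n → F)) (hC : IsCylinder C) (S : Set (Fin n → F))
    (hS : PathConn S) (hSsub : S ⊂ C ∩ (V : Set (Fin n → F))) :
    ∃ r ∈ (C ∩ (V : Set (Fin n → F))) \ S, PathConn (S ∪ {r}) := by
  classical
  obtain ⟨q₀, ⟨hq₀C, hq₀V⟩, hq₀S⟩ := Set.exists_of_ssubset hSsub
  obtain rfl | ⟨p₀, hp₀S⟩ := S.eq_empty_or_nonempty
  · exact ⟨q₀, ⟨⟨hq₀C, hq₀V⟩, hq₀S⟩, by simpa using pathConn_singleton q₀⟩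
  obtain ⟨hp₀C, hp₀V⟩ := hSsub.subset hp₀S
  let T : (Fin n → F) → F := fun s => if s ∈ S then 0 else 1
  have hT : ∀ s t, T s ≠ T t ↔ (s ∈ S ↔ t ∉ S) := fun s t => by
    by_cases hs : s ∈ S <;> by_cases ht : t ∈ S <;> simp [T, hs, ht]
  have hmem : diffMon F p₀ q₀ ∈ Ideal.span {m : MvPolynomial (Fin n) F |
      ∃ p ∈ V, ∃ q ∈ V, T p ≠ T q ∧ m = diffMon F p q} :=
    Ideal.subset_span ⟨p₀, hp₀V, q₀, hq₀V, (hT _ _).mpr (iff_of_true hp₀S hq₀S), rfl⟩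
  obtain ⟨i, hi, hXi⟩ := (Ideal.IsPrime.prod_mem_iff (hp := hprime T)).mp hmem
  obtain ⟨a, ha, b, hbV, hbS, hab⟩ : ∃ a ∈ S, ∃ b ∈ V, b ∉ S ∧ ∀ j ≠ i, a j = b j := by
    obtain ⟨s, hsV, t, htV, hst, hoff⟩ := exists_eq_off_of_X_mem_span_diffMon hXi
    by_cases hsS : s ∈ S
    · exact ⟨s, hsS, t, htV, ((hT s t).mp hst).mp hsS, hoff⟩
    · exact ⟨t, by simpa [hsS] using (hT s t).mp hst, s, hsV, hsS, fun j hj => (hoff j hj).symm⟩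
  have hbC : b ∈ C := hC.mem_of_eq_off hp₀C hq₀C (Finset.mem_filter.mp hi).2
    (hSsub.subset ha).1 hab
  have hdist : hammingDist a b = 1 :=
    hammingDist_eq_one_of_ne_of_eq_off (by rintro rfl; exact hbS ha) hab
  exact ⟨b, ⟨⟨hbC, hbV⟩, hbS⟩, hS.union_singleton ha hdist⟩

/-- If for every output assignment `T` the ideal `⟨m(p,q) : T p ≠ T q⟩` is
prime, then for every cylinder `C` and every connected proper subset
`S ⊊ C ∩ V` there is a point `r ∈ (C ∩ V) \ S` with `S ∪ {r}` connected. -/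
theorem stmt11 {n : ℕ} {F : Type*} [Field F] [Fintype F] [DecidableEq F]
    (V : Finset (Fin n → F))
    (hprime : ∀ T : (Fin n → F) → F,
      (Ideal.span {m : MvPolynomial (Fin n) F |
        ∃ p ∈ V, ∃ q ∈ V, T p ≠ T q ∧ m = diffMon F p q}).IsPrime)
    (C : Set (Fin n → F)) (hC : IsCylinder C) (S : Set (Fin n → F))
    (hS : PathConn S) (hSsub : S ⊂ C ∩ (V : Set (Fin n → F))) :
    ∃ r ∈ (C ∩ (V : Set (Fin n → F))) \ S, PathConn (S ∪ {r}) :=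
  stmt11_general V hprime C hC S hS hSsub
end

section
/- Let V ⊆ {0,1}^n be a Boolean input set with a point p that differs from every other point of V in at least l coordinates (a diagonal of length l). Then there is an output assignment T: V → {0,1} such that the pseudomonomial ideal I^{sgn} = ⟨m^{sgn}(s_i,s_j) : T(s_i) < T(s_j)⟩ has at least l primary components; equivalently, there are at least l signed min-sets. -/
open MvPolynomial

/-!
Take `T s = (s ≠ p)`. The generators of `I^{sgn}` are then the `m^{sgn}(p, s)`, `s ≠ p`, and each is
the product of the linear forms `x_j - a_j` over the coordinates where `s` differs from `p`, for one
fixed point `a ∈ {±1}^n`. Let `s₀ ≠ p` be a point of `V` nearest to `p` and `D₀` their difference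
set, so `|D₀| ≥ l`. For `k ∈ D₀`, the prime of polynomials vanishing on the affine subspace
`{x_j = a_j for j = k or j ∉ D₀}` contains `I^{sgn}`: a generator whose difference set avoided it
would come from a point closer to `p` than `s₀`. A minimal prime of `I^{sgn}` below it contains
`m^{sgn}(p, s₀)`, hence some `x_j - a_j` with `j ∈ D₀`, and the only such `j` is `k`. These minimal
primes are therefore pairwise distinct.
-/

/-- The pseudomonomial `m^{sgn}(s,s') = ∏_{s_k ≠ s'_k} (x_k - sign(s'_k - s_k))`
for Boolean points `s, s'` (coefficients in `ℚ`): the factor is `x_k - 1` when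
`s_k` increases to `s'_k` and `x_k + 1` when it decreases. -/
noncomputable def msgn {n : ℕ} (s s' : Fin n → Bool) : MvPolynomial (Fin n) ℚ :=
  ∏ k ∈ Finset.univ.filter (fun k => s k ≠ s' k),
    (X k - if s' k then 1 else -1)

theorem Ideal.card_le_ncard_minimalPrimes_s13 {R ι : Type*} [CommRing R] [IsNoetherianRing R]
    {I : Ideal R} {D : Finset ι} {f : ι → R} (hprod : ∏ j ∈ D, f j ∈ I)
    (hsep : ∀ k ∈ D, ∃ Q : Ideal R, Q.IsPrime ∧ I ≤ Q ∧ ∀ j ∈ D, f j ∈ Q → j = k) :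
    D.card ≤ I.minimalPrimes.ncard := by
  classical
  have hP : ∀ k ∈ D, ∃ P ∈ I.minimalPrimes, ∀ j ∈ D, f j ∈ P ↔ j = k := by
    intro k hk
    obtain ⟨Q, hQ, hIQ, hfQ⟩ := hsep k hk
    obtain ⟨P, hPmin, hPQ⟩ := Ideal.exists_minimalPrimes_le hIQ
    obtain ⟨i, hi, hfi⟩ := (hPmin.1.1.prod_mem_iff).mp (hPmin.1.2 hprod)
    obtain rfl := hfQ i hi (hPQ hfi)
    exact ⟨P, hPmin, fun j hj => ⟨fun h => hfQ j hj (hPQ h), fun h => h ▸ hfi⟩⟩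
  choose! P hPmin hPf using hP
  have hinj : Set.InjOn P D := fun k hk k' hk' hPP =>
    ((hPf k' hk' k hk).mp (hPP ▸ (hPf k hk k hk).mpr rfl))
  calc D.card = (D.image P).card := (Finset.card_image_of_injOn hinj).symm
    _ = (↑(D.image P) : Set (Ideal R)).ncard := (Set.ncard_coe_finset _).symm
    _ ≤ I.minimalPrimes.ncard :=
      Set.ncard_le_ncard (by simpa [Set.subset_def] using hPmin)
        (I.finite_minimalPrimes_of_isNoetherianRing R)

namespace MvPolynomial

variable {σ K : Type*} [CommRing K] [Nontrivial K]

theorem X_sub_C_ne_zero (j : σ) (c : K) : (X j - C c : MvPolynomial σ K) ≠ 0 := by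
  classical
  intro h
  have := congrArg (eval (Function.update 0 j (c + 1))) h
  simp at this

theorem X_sub_C_mem_ker_aeval_iff (S : Set σ) [DecidablePred (· ∈ S)] (a : σ → K) (j : σ) :
    X j - C (a j) ∈ RingHom.ker (aeval (R := K) fun i => if i ∈ S then C (a i) else X i) ↔
      j ∈ S := by
  by_cases hj : j ∈ S
  · simp [hj, algebraMap_eq]
  · simpa [hj, algebraMap_eq] using X_sub_C_ne_zero j (a j)

end MvPolynomial

theorem Finset.exists_mem_eq_or_notMem_of_card_le_s13 {α : Type*} [DecidableEq α]
    {s t : Finset α} {k : α} (hk : k ∈ s) (hcard : s.card ≤ t.card) : ∃ j ∈ t, j = k ∨ j ∉ s := by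
  by_contra! h
  have : t ⊆ s.erase k := fun j hj => Finset.mem_erase.mpr (h j hj)
  have := Finset.card_le_card this
  have := Finset.card_erase_lt_of_mem hk
  omega

section msgn

variable {n : ℕ}

theorem msgn_eq_prod_X_sub_C (p s : Fin n → Bool) :
    msgn p s = ∏ j ∈ Finset.univ.filter (fun j => p j ≠ s j),
      (X j - C (if p j then -1 else 1)) := by
  refine Finset.prod_congr rfl fun j hj => ?_
  have hj : p j ≠ s j := (Finset.mem_filter.mp hj).2
  cases hp : p j <;> cases hs : s j <;> simp_all

theorem setOf_msgn_decide_ne_lt (V : Finset (Fin n → Bool)) {p : Fin n → Bool} (hp : p ∈ V) :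
    {m | ∃ s ∈ V, ∃ s' ∈ V, decide (s ≠ p) < decide (s' ≠ p) ∧ m = msgn s s'} =
      msgn p '' {s | s ∈ V ∧ s ≠ p} := by
  ext m
  simp only [Bool.lt_iff, decide_eq_false_iff_not, decide_eq_true_eq, not_not, Set.mem_ofPred_eq,
    Set.mem_image]
  constructor
  · rintro ⟨s, -, s', hs', ⟨rfl, hs'p⟩, rfl⟩
    exact ⟨s', ⟨hs', hs'p⟩, rfl⟩
  · rintro ⟨s', ⟨hs', hs'p⟩, rfl⟩
    exact ⟨p, hp, s', hs', ⟨rfl, hs'p⟩, rfl⟩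

end msgn

/-- If a Boolean input set `V` (with at least two points) has a diagonal of
length `l` at `p`, then there is an output assignment `T` such that the
pseudomonomial ideal `I^{sgn} = ⟨m^{sgn}(s,s') : T s < T s'⟩` has at least `l`
minimal primes (equivalently, at least `l` signed min-sets). -/
theorem stmt13 {n : ℕ} (V : Finset (Fin n → Bool)) (p : Fin n → Bool) (hp : p ∈ V)
    (hV : ∃ q ∈ V, q ≠ p) (l : ℕ)
    (hdiag : ∀ q ∈ V, q ≠ p → l ≤ hammingDist p q) :
    ∃ T : (Fin n → Bool) → Bool,
      l ≤ (Ideal.minimalPrimes (Ideal.span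
        {m : MvPolynomial (Fin n) ℚ |
          ∃ s ∈ V, ∃ s' ∈ V, T s < T s' ∧ m = msgn s s'})).ncard := by
  classical
  obtain ⟨q, hq, hqp⟩ := hV
  obtain ⟨s₀, hs₀V, hmin⟩ := (V.filter (· ≠ p)).exists_min_image (hammingDist p)
    ⟨q, Finset.mem_filter.mpr ⟨hq, hqp⟩⟩
  obtain ⟨hs₀, hs₀p⟩ := Finset.mem_filter.mp hs₀V
  refine ⟨fun s => decide (s ≠ p), ?_⟩
  rw [setOf_msgn_decide_ne_lt V hp]
  set a : Fin n → ℚ := fun j => if p j then -1 else 1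
  set D₀ := Finset.univ.filter (fun j => p j ≠ s₀ j)
  refine (hdiag s₀ hs₀ hs₀p).trans (Ideal.card_le_ncard_minimalPrimes_s13 (D := D₀)
    (f := fun j => X j - C (a j)) ?_ fun k hk => ?_)
  · rw [← msgn_eq_prod_X_sub_C]
    exact Ideal.subset_span ⟨s₀, ⟨hs₀, hs₀p⟩, rfl⟩
  let S : Set (Fin n) := {j | j = k ∨ j ∉ D₀}
  refine ⟨RingHom.ker (aeval fun i => if i ∈ S then C (a i) else X i), RingHom.ker_isPrime _,
    ?_, fun j hj h => ?_⟩
  · rw [Ideal.span_le]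
    rintro _ ⟨s, ⟨hs, hsp⟩, rfl⟩
    obtain ⟨j, hj, hjS⟩ := Finset.exists_mem_eq_or_notMem_of_card_le_s13 hk
      (hmin s (Finset.mem_filter.mpr ⟨hs, hsp⟩))
    rw [SetLike.mem_coe, msgn_eq_prod_X_sub_C, ← Finset.mul_prod_erase _ _ hj]
    exact Ideal.mul_mem_right _ _ ((X_sub_C_mem_ker_aeval_iff S a j).mpr hjS)
  · exact ((X_sub_C_mem_ker_aeval_iff S a j).mp h).resolve_right (not_not.mpr hj)
end

section
/- Let V ⊆ {0,1}^n be a Boolean input set that is cylindrically connected. Then for every output assignment T: V → {0,1}, every generator of the pseudomonomial ideal I^{sgn} = ⟨m^{sgn}(p,q) : T(p) < T(q)⟩ is divisible by a univariate generator m^{sgn}(s,r) with Hamming distance d(s,r) = 1; consequently I^{sgn} has at most one minimal prime over it and the data set has at most one signed min-set. -/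
open MvPolynomial

/-!
A path in `C(p,q) ∩ V` from `p` to `q` has a step `s → r`, flipping a single coordinate `j`, at
which `T` jumps from `0` to `1`. As `s, r ∈ C(p,q)`, `p j ≠ q j`. If `r j = q j`, then
`m^{sgn}(s,r) = X j - sign (q j)` is a factor of `m^{sgn}(p,q)`. Otherwise `r` is strictly closer to
`p` than `q` is, `T p < T r` and `m^{sgn}(p,r) ∣ m^{sgn}(p,q)`, so we recurse on `(p,r)`.

Hence every generator of `I^{sgn}` is a multiple of a linear form `X j - c ∈ I^{sgn}`. If two such
forms share the variable but not the constant, `I^{sgn}` is the unit ideal; otherwise it is the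
kernel of the substitution `X j ↦ c`, a prime ideal.
-/

lemma exists_lt_eq_false_succ_eq_true (f : ℕ → Bool) {l : ℕ} (h0 : f 0 = false)
    (hl : f l = true) : ∃ k < l, f k = false ∧ f (k + 1) = true := by
  induction l with
  | zero => simp [h0] at hl
  | succ l ih =>
    cases hfl : f l
    · exact ⟨l, l.lt_succ_self, hfl, hl⟩
    · obtain ⟨k, hk, hfk⟩ := ih hfl
      exact ⟨k, hk.trans l.lt_succ_self, hfk⟩

section Cylinder

variable {n : ℕ} {F : Type*}

/-- The cylinder `C(p,q)` of the paper. -/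
def minCylinder (p q : Fin n → F) : Set (Fin n → F) :=
  {s | ∀ i, p i = q i → s i = p i}

lemma isCylinder_minCylinder (p q : Fin n → F) : IsCylinder (minCylinder p q) :=
  ⟨{i | p i = q i}, p, rfl⟩

lemma left_mem_minCylinder (p q : Fin n → F) : p ∈ minCylinder p q := fun _ _ => rfl

lemma right_mem_minCylinder (p q : Fin n → F) : q ∈ minCylinder p q := fun _ h => h.symm

lemma ne_of_mem_minCylinder {p q s r : Fin n → F} (hs : s ∈ minCylinder p q)
    (hr : r ∈ minCylinder p q) {j : Fin n} (hsr : s j ≠ r j) : p j ≠ q j :=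
  fun hpq => hsr ((hs j hpq).trans (hr j hpq).symm)

lemma hammingDist_lt_of_mem_minCylinder [DecidableEq F] {p q r : Fin n → F}
    (hr : r ∈ minCylinder p q) {j : Fin n} (hrj : r j = p j) (hpq : p j ≠ q j) :
    hammingDist p r < hammingDist p q := by
  refine Finset.card_lt_card ((Finset.ssubset_iff_of_subset ?_).mpr ⟨j, ?_, ?_⟩)
  · intro i
    simp only [Finset.mem_filter, Finset.mem_univ, true_and]
    exact mt fun hpq => (hr i hpq).symm
  · simpa using hpq
  · simp [hrj]

lemma mem_minCylinder_iff_bool {p q s : Fin n → Bool} :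
    s ∈ minCylinder p q ↔ ∀ i, s i = p i ∨ s i = q i := by
  refine forall_congr' fun i => ?_
  cases p i <;> cases q i <;> cases s i <;> decide

end Cylinder

section Msgn

variable {n : ℕ}

lemma msgn_dvd_msgn {s r p q : Fin n → Bool}
    (h : ∀ i, s i ≠ r i → p i ≠ q i ∧ r i = q i) : msgn s r ∣ msgn p q := by
  unfold msgn
  rw [Finset.prod_congr rfl fun i hi => by rw [(h i (Finset.mem_filter.mp hi).2).2]]
  exact Finset.prod_dvd_prod_of_subset _ _ _ fun i hi => by simpa using (h i (by simpa using hi)).1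

lemma msgn_eq_X_sub_C {s r : Fin n → Bool} {j : Fin n}
    (hj : Finset.univ.filter (fun i => s i ≠ r i) = {j}) :
    msgn s r = X j - C (if r j then 1 else -1) := by
  unfold msgn
  rw [hj, Finset.prod_singleton]
  split_ifs <;> simp

end Msgn

theorem exists_adjacent_msgn_dvd_msgn {n : ℕ} {V : Set (Fin n → Bool)}
    (hcc : ∀ C : Set (Fin n → Bool), IsCylinder C → PathConn (C ∩ V))
    (T : (Fin n → Bool) → Bool) {p q : Fin n → Bool} (hp : p ∈ V) (hq : q ∈ V)
    (hT : T p < T q) :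
    ∃ s ∈ V, ∃ r ∈ V, T s < T r ∧ hammingDist s r = 1 ∧ msgn s r ∣ msgn p q := by
  induction hd : hammingDist p q using Nat.strong_induction_on generalizing q with
  | _ N ih =>
    obtain ⟨hTp, hTq⟩ := Bool.lt_iff.mp hT
    obtain ⟨l, c, hc0, hcl, hcV, hstep⟩ := hcc _ (isCylinder_minCylinder p q) p
      ⟨left_mem_minCylinder p q, hp⟩ q ⟨right_mem_minCylinder p q, hq⟩
    obtain ⟨k, hkl, hTs, hTr⟩ :=
      exists_lt_eq_false_succ_eq_true (T ∘ c) (l := l) (by simpa [hc0]) (by simpa [hcl])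
    obtain ⟨hsC, hsV⟩ := hcV k hkl.le
    obtain ⟨hrC, hrV⟩ := hcV (k + 1) hkl
    have hsr : hammingDist (c k) (c (k + 1)) = 1 := hstep k hkl
    obtain ⟨j, hj⟩ := Finset.card_eq_one.mp hsr
    have hsrj : c k j ≠ c (k + 1) j := by simpa using hj.ge (Finset.mem_singleton_self j)
    have hpq : p j ≠ q j := ne_of_mem_minCylinder hsC hrC hsrj
    rcases (mem_minCylinder_iff_bool.mp hrC j).symm with hrq | hrp
    · refine ⟨c k, hsV, c (k + 1), hrV, Bool.lt_iff.mpr ⟨hTs, hTr⟩, hsr,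
        msgn_dvd_msgn fun i hi => ?_⟩
      obtain rfl : i = j := by simpa using hj.le (by simpa using hi)
      exact ⟨hpq, hrq⟩
    · have hpr : ∀ i, p i ≠ c (k + 1) i → p i ≠ q i ∧ c (k + 1) i = q i := fun i hi =>
        have hrq := (mem_minCylinder_iff_bool.mp hrC i).resolve_left (Ne.symm hi)
        ⟨hrq ▸ hi, hrq⟩
      obtain ⟨s, hs, r, hr, hTsr, hadj, hdvd⟩ :=
        ih _ (hd ▸ hammingDist_lt_of_mem_minCylinder hrC hrp hpq) hrV
          (Bool.lt_iff.mpr ⟨hTp, hTr⟩) rfl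
      exact ⟨s, hs, r, hr, hTsr, hadj, hdvd.trans (msgn_dvd_msgn hpr)⟩

namespace MvPolynomial

variable {σ K : Type*} [Field K] {I : Ideal (MvPolynomial σ K)}

lemma eq_of_X_sub_C_mem (hI : I ≠ ⊤) {j : σ} {a b : K} (ha : X j - C a ∈ I)
    (hb : X j - C b ∈ I) : a = b := by
  by_contra hab
  have hC : C (a - b) ∈ I := by
    simpa [map_sub] using I.sub_mem hb ha
  exact hI (Ideal.eq_top_of_isUnit_mem _ hC ((sub_ne_zero.mpr hab).isUnit.map C))

open Classical in
noncomputable def linearSubst (I : Ideal (MvPolynomial σ K)) (j : σ) : MvPolynomial σ K :=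
  if h : ∃ c, X j - C c ∈ I then C h.choose else X j

lemma mk_aeval_linearSubst (f : MvPolynomial σ K) :
    Ideal.Quotient.mk I (aeval (linearSubst I) f) = Ideal.Quotient.mk I f := by
  suffices (Ideal.Quotient.mkₐ K I).comp (aeval (linearSubst I)) = Ideal.Quotient.mkₐ K I from
    AlgHom.congr_fun this f
  refine algHom_ext fun j => ?_
  simp only [AlgHom.comp_apply, aeval_X, linearSubst]
  split_ifs with h
  · exact (Ideal.Quotient.mk_eq_mk_iff_sub_mem _ _).mpr (by simpa using I.neg_mem h.choose_spec)
  · rfl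

lemma aeval_linearSubst_X_sub_C (hI : I ≠ ⊤) {j : σ} {c : K} (h : X j - C c ∈ I) :
    aeval (linearSubst I) (X j - C c) = 0 := by
  have hex : ∃ c, X j - C c ∈ I := ⟨c, h⟩
  simp [linearSubst, hex, eq_of_X_sub_C_mem hI hex.choose_spec h, MvPolynomial.algebraMap_eq]

lemma isPrime_span_of_forall_X_sub_C_dvd {G : Set (MvPolynomial σ K)} (hI : Ideal.span G ≠ ⊤)
    (hG : ∀ g ∈ G, ∃ j c, X j - C c ∈ G ∧ X j - C c ∣ g) : (Ideal.span G).IsPrime := by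
  suffices RingHom.ker (aeval (linearSubst (Ideal.span G))) = Ideal.span G from
    this ▸ RingHom.ker_isPrime _
  refine le_antisymm (fun f hf => ?_) (Ideal.span_le.mpr fun g hg => ?_)
  · rw [← Ideal.Quotient.eq_zero_iff_mem, ← mk_aeval_linearSubst, RingHom.mem_ker.mp hf,
      map_zero]
  · obtain ⟨j, c, hjc, g, rfl⟩ := hG g hg
    rw [SetLike.mem_coe, RingHom.mem_ker, map_mul,
      aeval_linearSubst_X_sub_C hI (Ideal.subset_span hjc), zero_mul]

lemma minimalPrimes_span_subsingleton_of_forall_X_sub_C_dvd {G : Set (MvPolynomial σ K)}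
    (hG : ∀ g ∈ G, ∃ j c, X j - C c ∈ G ∧ X j - C c ∣ g) :
    (Ideal.span G).minimalPrimes.Subsingleton := by
  by_cases hI : Ideal.span G = ⊤
  · simp [hI, Ideal.minimalPrimes_top]
  · have := isPrime_span_of_forall_X_sub_C_dvd hI hG
    simp [Ideal.minimalPrimes_eq_subsingleton_self]

end MvPolynomial

/-- If a Boolean input set `V` is cylindrically connected, then for every
output assignment `T` every generator `m^{sgn}(p,q)` of
`I^{sgn} = ⟨m^{sgn}(p,q) : T p < T q⟩` is divisible by a univariate generator
`m^{sgn}(s,r)` with `d(s,r) = 1`; consequently `I^{sgn}` has at most one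
minimal prime, i.e., at most one signed min-set. -/
theorem stmt14 {n : ℕ} (V : Finset (Fin n → Bool))
    (hcc : ∀ C : Set (Fin n → Bool), IsCylinder C → PathConn (C ∩ (V : Set (Fin n → Bool))))
    (T : (Fin n → Bool) → Bool) :
    (∀ p ∈ V, ∀ q ∈ V, T p < T q →
      ∃ s ∈ V, ∃ r ∈ V, T s < T r ∧ hammingDist s r = 1 ∧ msgn s r ∣ msgn p q) ∧
    (Ideal.minimalPrimes (Ideal.span
      {m : MvPolynomial (Fin n) ℚ |
        ∃ p ∈ V, ∃ q ∈ V, T p < T q ∧ m = msgn p q})).Subsingleton := by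
  have hdvd : ∀ p ∈ V, ∀ q ∈ V, T p < T q →
      ∃ s ∈ V, ∃ r ∈ V, T s < T r ∧ hammingDist s r = 1 ∧ msgn s r ∣ msgn p q :=
    fun p hp q hq hT => exists_adjacent_msgn_dvd_msgn hcc T hp hq hT
  refine ⟨hdvd, minimalPrimes_span_subsingleton_of_forall_X_sub_C_dvd ?_⟩
  rintro _ ⟨p, hp, q, hq, hT, rfl⟩
  obtain ⟨s, hs, r, hr, hTsr, hsr, hsrpq⟩ := hdvd p hp q hq hT
  obtain ⟨j, hj⟩ := Finset.card_eq_one.mp hsr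
  rw [msgn_eq_X_sub_C hj] at hsrpq
  exact ⟨j, _, msgn_eq_X_sub_C hj ▸ ⟨s, hs, r, hr, hTsr, rfl⟩, hsrpq⟩
end

section
/- Let I^{ext} be a squarefree monomial ideal in F[x_1,...,x_n, y_1,...,y_n] with primary decomposition I^{ext} = P_1 ∩ ... ∩ P_l where each P_j is generated by a subset of the variables {x_i, y_i}. Let φ be the ring homomorphism sending y_i ↦ x_i and fixing x_i. Then the ideal generated by the φ-images of the generators of I^{ext} equals the intersection of the ideals generated by the φ-images of the generators of the P_j. -/
open MvPolynomial

/-- The folding homomorphism `F[x_1,...,x_n,y_1,...,y_n] → F[x_1,...,x_n]`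
sending `y_i ↦ x_i` and fixing each `x_i` (here `x_i = X (Sum.inl i)` and
`y_i = X (Sum.inr i)`). -/
noncomputable def fold (n : ℕ) (F : Type*) [Field F] :
    MvPolynomial (Fin n ⊕ Fin n) F →ₐ[F] MvPolynomial (Fin n) F :=
  aeval (Sum.elim X X)

/-!
A squarefree monomial ideal `(x^σ : σ ∈ G)` and an intersection of variable ideals `⋂ⱼ (X '' A j)`
are both determined by the supports of the monomials they contain, so the decomposition
`I = ⋂ⱼ P_j` is the purely combinatorial statement "a set `T` of variables contains some `σ ∈ G`
iff `T` meets every `A j`". Folding `y_i ↦ x_i` sends `x^σ` to the squarefree monomial on the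
image of `σ`, because no `σ ∈ G` contains both `x_i` and `y_i`; testing the combinatorial
statement on preimages of sets under the folding map of indices gives it for the images.
-/

namespace MvPolynomial

variable {ι κ ι' R : Type*} [CommSemiring R]

theorem sum_single_one_apply [DecidableEq ι] (σ : Finset ι) (a : ι) :
    (∑ i ∈ σ, Finsupp.single i 1 : ι →₀ ℕ) a = if a ∈ σ then 1 else 0 := by
  simp [Finset.sum_apply', Finsupp.single_apply]

theorem sum_single_one_le_iff (σ : Finset ι) (m : ι →₀ ℕ) :
    (∑ i ∈ σ, Finsupp.single i 1 : ι →₀ ℕ) ≤ m ↔ σ ⊆ m.support := by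
  classical
  simp only [Finsupp.le_def, sum_single_one_apply, Finset.subset_iff, Finsupp.mem_support_iff]
  refine forall_congr' fun a => ?_
  split_ifs with ha <;> simp [ha, Nat.one_le_iff_ne_zero]

theorem support_sum_single_one (σ : Finset ι) :
    (∑ i ∈ σ, Finsupp.single i 1 : ι →₀ ℕ).support = σ := by
  classical
  ext a
  simp [sum_single_one_apply]

theorem mem_span_prod_X_image_iff {G : Set (Finset ι)} {p : MvPolynomial ι R} :
    p ∈ Ideal.span ((fun σ => ∏ i ∈ σ, X i) '' G) ↔
      ∀ m ∈ p.support, ∃ σ ∈ G, σ ⊆ m.support := by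
  have hG : (fun σ => ∏ i ∈ σ, (X i : MvPolynomial ι R)) '' G =
      (fun s => monomial s 1) '' ((fun σ => ∑ i ∈ σ, Finsupp.single i 1) '' G) := by
    rw [Set.image_image]
    exact Set.image_congr fun σ _ => (monomial_sum_one σ _).symm
  simp [hG, mem_ideal_span_monomial_image, sum_single_one_le_iff]

theorem mem_iInf_span_X_image_iff {A : ι' → Set ι} {p : MvPolynomial ι R} :
    p ∈ ⨅ j, Ideal.span (X '' A j) ↔ ∀ m ∈ p.support, ∀ j, ∃ i ∈ A j, i ∈ m.support := by
  simp only [Ideal.mem_iInf, mem_ideal_span_X_image, Finsupp.mem_support_iff]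
  exact ⟨fun h m hm j => h j m hm, fun h j m hm => h m hm j⟩

theorem span_prod_X_image_eq_iInf_iff [Nontrivial R] {G : Set (Finset ι)} {A : ι' → Set ι} :
    Ideal.span ((fun σ => ∏ i ∈ σ, (X i : MvPolynomial ι R)) '' G) = ⨅ j, Ideal.span (X '' A j) ↔
      ∀ T : Finset ι, (∃ σ ∈ G, σ ⊆ T) ↔ ∀ j, ∃ i ∈ A j, i ∈ T := by
  constructor
  · intro h T
    classical
    simpa only [mem_span_prod_X_image_iff, mem_iInf_span_X_image_iff, support_monomial,
      one_ne_zero, if_false, Finset.mem_singleton, forall_eq, support_sum_single_one] using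
      SetLike.ext_iff.mp h (monomial (∑ i ∈ T, Finsupp.single i 1) 1)
  · intro h
    ext p
    rw [mem_span_prod_X_image_iff, mem_iInf_span_X_image_iff]
    exact forall₂_congr fun m _ => h m.support

theorem span_prod_X_image_image_eq_iInf [Nontrivial R] [Finite ι] [DecidableEq κ] (π : ι → κ)
    {G : Set (Finset ι)} {A : ι' → Set ι}
    (h : Ideal.span ((fun σ => ∏ i ∈ σ, (X i : MvPolynomial ι R)) '' G) =
      ⨅ j, Ideal.span (X '' A j)) :
    Ideal.span ((fun τ => ∏ a ∈ τ, (X a : MvPolynomial κ R)) '' (Finset.image π '' G)) =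
      ⨅ j, Ideal.span (X '' (π '' A j)) := by
  rw [span_prod_X_image_eq_iInf_iff] at h ⊢
  intro T
  simpa [Finset.image_subset_iff, Set.subset_def] using h (Set.toFinite (π ⁻¹' T)).toFinset

theorem rename_prod_X_of_injOn [DecidableEq κ] {π : ι → κ} {σ : Finset ι} (h : Set.InjOn π σ) :
    rename π (∏ i ∈ σ, X i : MvPolynomial ι R) = ∏ a ∈ σ.image π, X a := by
  rw [map_prod, Finset.prod_image h]
  simp only [rename_X]

theorem span_rename_image_eq_iInf [Nontrivial R] [Finite ι] (π : ι → κ)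
    {G : Set (Finset ι)} {A : ι' → Set ι} (hinj : ∀ σ ∈ G, Set.InjOn π σ)
    (h : Ideal.span ((fun σ => ∏ i ∈ σ, (X i : MvPolynomial ι R)) '' G) =
      ⨅ j, Ideal.span (X '' A j)) :
    Ideal.span (rename π '' ((fun σ => ∏ i ∈ σ, (X i : MvPolynomial ι R)) '' G)) =
      ⨅ j, Ideal.span (rename (R := R) π '' (X '' A j)) := by
  classical
  have hG : rename π '' ((fun σ => ∏ i ∈ σ, (X i : MvPolynomial ι R)) '' G) =
      (fun τ => ∏ a ∈ τ, X a) '' (Finset.image π '' G) := by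
    simp only [Set.image_image]
    exact Set.image_congr fun σ hσ => rename_prod_X_of_injOn (hinj σ hσ)
  have hA : ∀ j, rename (R := R) π '' (X '' A j) = X '' (π '' A j) := by
    simp [Set.image_image]
  simp only [hG, hA]
  exact span_prod_X_image_image_eq_iInf π h

end MvPolynomial

theorem Sum.injOn_elim_id_id {α : Type*} {s : Set (α ⊕ α)}
    (h : ∀ a, ¬(Sum.inl a ∈ s ∧ Sum.inr a ∈ s)) : Set.InjOn (Sum.elim id id) s := by
  rintro (a | a) ha (b | b) hb hab <;> simp only [Sum.elim_inl, Sum.elim_inr, id] at hab <;>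
    subst hab
  · rfl
  · exact absurd ⟨ha, hb⟩ (h a)
  · exact absurd ⟨hb, ha⟩ (h a)
  · rfl

theorem fold_eq_rename (n : ℕ) (F : Type*) [Field F] : fold n F = rename (Sum.elim id id) :=
  algHom_ext fun i => by cases i <;> simp [fold]

/-- Let `I^{ext}` be a squarefree monomial ideal in `F[x,y]` whose monomial
generators (indexed by `G`) never involve both `x_i` and `y_i`, with a
decomposition `I^{ext} = P_1 ∩ ... ∩ P_l` where each `P_j` is generated by a
subset `A j` of the variables. Then the ideal generated by the `φ`-images of
the generators of `I^{ext}` equals the intersection of the ideals generated by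
the `φ`-images of the generators of the `P_j`. -/
theorem stmt19 {n : ℕ} {F : Type*} [Field F] (G : Set (Finset (Fin n ⊕ Fin n)))
    (hG : ∀ σ ∈ G, ∀ i : Fin n, ¬(Sum.inl i ∈ σ ∧ Sum.inr i ∈ σ))
    (l : ℕ) (A : Fin l → Set (Fin n ⊕ Fin n))
    (hdec : Ideal.span ((fun σ => ∏ i ∈ σ, (X i : MvPolynomial (Fin n ⊕ Fin n) F)) '' G)
      = ⨅ j : Fin l,
          Ideal.span ((fun i => (X i : MvPolynomial (Fin n ⊕ Fin n) F)) '' A j)) :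
    Ideal.span (fold n F ''
        ((fun σ => ∏ i ∈ σ, (X i : MvPolynomial (Fin n ⊕ Fin n) F)) '' G))
      = ⨅ j : Fin l,
          Ideal.span (fold n F ''
            ((fun i => (X i : MvPolynomial (Fin n ⊕ Fin n) F)) '' A j)) := by
  rw [fold_eq_rename]
  exact span_rename_image_eq_iInf _ (fun σ hσ => Sum.injOn_elim_id_id (hG σ hσ)) hdec
end
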